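/- For every u ∈ ℳ one has I(u) = sup_{s,t ≥ 0} I(s·u⁺ + t·u⁻); in particular the supremum is attained at s = t = 1. -/

import Mathlib

/-!
Write `v = u⁺`, `w = u⁻`. The `c`-term and the logarithmic term of `I` split exactly along the
disjoint supports of `v` and `w`. The norm term does not split (differences couple neighbouring
sites), but `Δv · Δw ≥ 0`, so Jensen's inequality for `x ↦ x ^ p` gives
`‖s v + t w‖ ^ p ≤ s ^ p α_v + t ^ p α_w`, where `α_v` is the principal part of `⟨I'(u), v⟩`,
with equality at `s = t = 1`. The Nehari conditions identify `α_v` with `∑ c |v|^q ln |v|^r`, so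
`I(s v + t w) ≤ f_v(s) + f_w(t)` with `f(s) = α (s^p/p - s^q/q) + (r γ / q²) s^q (1 - q ln s)` and
`γ = ∑ c |v|^q`. The first bracket is maximal at `s = 1` by Bernoulli's inequality, the second by
`y - y ln y ≤ 1`, and `I(u) = f_v(1) + f_w(1)`.
-/

noncomputable section

open Real Filter Set

namespace DPLap

/-- Forward difference operator. -/
def dlt (u : ℤ → ℝ) (n : ℤ) : ℝ := u (n + 1) - u n

/-- Positive part `u⁺`. -/
def pos (u : ℤ → ℝ) : ℤ → ℝ := fun n => max (u n) 0

/-- Negative part `u⁻`. -/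
def neg (u : ℤ → ℝ) : ℤ → ℝ := fun n => min (u n) 0

/-- Summand of the `E`-norm. -/
def nsum (a b : ℤ → ℝ) (p : ℕ) (u : ℤ → ℝ) (n : ℤ) : ℝ :=
  a n * |dlt u n| ^ p + b n * |u n| ^ p

/-- Membership in the space `E`. -/
def memE (a b : ℤ → ℝ) (p : ℕ) (u : ℤ → ℝ) : Prop :=
  Summable (nsum a b p u)

/-- The norm `‖u‖ = (∑ [a|Δu|^p + b|u|^p])^(1/p)`. -/
def dnorm (a b : ℤ → ℝ) (p : ℕ) (u : ℤ → ℝ) : ℝ :=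
  (∑' n : ℤ, nsum a b p u n) ^ ((p : ℝ)⁻¹)

/-- Summand `c(n)|u(n)|^q ln(|u(n)|^r)` of the logarithmic term (with the
convention `0^q ln 0 = 0`, automatic from `Real.rpow` and `Real.log`). -/
def logSummand (c : ℤ → ℝ) (q r : ℝ) (u : ℤ → ℝ) (n : ℤ) : ℝ :=
  c n * |u n| ^ q * Real.log (|u n| ^ r)

/-- Membership in `𝒟`. -/
def memD (a b c : ℤ → ℝ) (p : ℕ) (q r : ℝ) (u : ℤ → ℝ) : Prop :=
  memE a b p u ∧ Summable (logSummand c q r u)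

/-- The energy functional `I`. -/
def En (a b c : ℤ → ℝ) (p : ℕ) (q r : ℝ) (u : ℤ → ℝ) : ℝ :=
  (1 / (p : ℝ)) * dnorm a b p u ^ p
    + (r / q ^ 2) * ∑' n : ℤ, c n * |u n| ^ q
    - (1 / q) * ∑' n : ℤ, logSummand c q r u n

/-- The pairing `⟨I'(u), v⟩`. -/
def pr (a b c : ℤ → ℝ) (p : ℕ) (q r : ℝ) (u v : ℤ → ℝ) : ℝ :=
  (∑' n : ℤ, (a n * |dlt u n| ^ (p - 2) * dlt u n * dlt v n
      + b n * |u n| ^ (p - 2) * u n * v n))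
    - ∑' n : ℤ, c n * |u n| ^ (q - 2) * u n * v n * Real.log (|u n| ^ r)

/-- The Nehari set `𝒩`. -/
def Nset (a b c : ℤ → ℝ) (p : ℕ) (q r : ℝ) : Set (ℤ → ℝ) :=
  {u | memD a b c p q r u ∧ u ≠ 0 ∧ pr a b c p q r u u = 0}

/-- The sign-changing Nehari set `ℳ`. -/
def Mset (a b c : ℤ → ℝ) (p : ℕ) (q r : ℝ) : Set (ℤ → ℝ) :=
  {u | memD a b c p q r u ∧ pos u ≠ 0 ∧ neg u ≠ 0 ∧
      pr a b c p q r u (pos u) = 0 ∧ pr a b c p q r u (neg u) = 0}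

/-- `m* = inf_ℳ I`. -/
def mStar (a b c : ℤ → ℝ) (p : ℕ) (q r : ℝ) : ℝ :=
  sInf (En a b c p q r '' Mset a b c p q r)

/-- `c* = inf_𝒩 I`. -/
def cStar (a b c : ℤ → ℝ) (p : ℕ) (q r : ℝ) : ℝ :=
  sInf (En a b c p q r '' Nset a b c p q r)


lemma abs_pow_sub_two_mul_self {p : ℕ} (hp : 2 ≤ p) (x : ℝ) : |x| ^ (p - 2) * x * x = |x| ^ p := by
  rw [mul_assoc, ← abs_mul_abs_self, ← sq, ← pow_add, Nat.sub_add_cancel hp]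

lemma abs_rpow_sub_two_mul_self {q : ℝ} (hq : q ≠ 0) (x : ℝ) : |x| ^ (q - 2) * x * x = |x| ^ q := by
  rw [mul_assoc, ← abs_mul_abs_self, ← sq, ← Real.rpow_two,
    ← Real.rpow_add' (abs_nonneg x) (by simpa using hq), sub_add_cancel]

lemma abs_pow_sub_two_mul_add_mul_nonneg (p : ℕ) {A B : ℝ} (hAB : 0 ≤ A * B) :
    0 ≤ |A + B| ^ (p - 2) * (A + B) * A := by
  rw [mul_assoc]
  exact mul_nonneg (by positivity) (by nlinarith [sq_nonneg A])

lemma mul_add_mul_pow_le {p : ℕ} (hp : 1 ≤ p) {x y s t : ℝ} (hx : 0 ≤ x) (hy : 0 ≤ y)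
    (hs : 0 ≤ s) (ht : 0 ≤ t) :
    (s * x + t * y) ^ p ≤ (x + y) ^ (p - 1) * (s ^ p * x + t ^ p * y) := by
  rcases (add_nonneg hx hy).eq_or_lt with hxy | hxy
  · obtain ⟨rfl, rfl⟩ : x = 0 ∧ y = 0 := ⟨by linarith, by linarith⟩
    simp [zero_pow (by omega : p ≠ 0)]
  have hjensen := (convexOn_pow p).2 (Set.mem_Ici.2 hs) (Set.mem_Ici.2 ht)
    (div_nonneg hx hxy.le) (div_nonneg hy hxy.le) (by field_simp)
  simp only [smul_eq_mul] at hjensen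
  have hsplit : s * x + t * y = (x + y) * (x / (x + y) * s + y / (x + y) * t) := by field_simp
  calc (s * x + t * y) ^ p = (x + y) ^ p * (x / (x + y) * s + y / (x + y) * t) ^ p := by
        rw [hsplit, mul_pow]
    _ ≤ (x + y) ^ p * (x / (x + y) * s ^ p + y / (x + y) * t ^ p) := by gcongr
    _ = (x + y) ^ (p - 1) * (s ^ p * x + t ^ p * y) := by
        rw [← Nat.sub_add_cancel hp, pow_succ, Nat.add_sub_cancel]
        field_simp

lemma abs_mul_add_mul_pow_le {p : ℕ} (hp : 2 ≤ p) {A B s t : ℝ} (hAB : 0 ≤ A * B)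
    (hs : 0 ≤ s) (ht : 0 ≤ t) :
    |s * A + t * B| ^ p ≤ s ^ p * (|A + B| ^ (p - 2) * (A + B) * A)
      + t ^ p * (|A + B| ^ (p - 2) * (A + B) * B) := by
  have key : ∀ {x y : ℝ}, 0 ≤ x → 0 ≤ y → |s * x + t * y| ^ p ≤
      s ^ p * (|x + y| ^ (p - 2) * (x + y) * x) + t ^ p * (|x + y| ^ (p - 2) * (x + y) * y) := by
    intro x y hx hy
    have hpow : (x + y) ^ (p - 2) * (x + y) = (x + y) ^ (p - 1) := by
      rw [← pow_succ]; congr 1; omega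
    rw [abs_of_nonneg (by positivity), abs_of_nonneg (by positivity), hpow]
    linear_combination mul_add_mul_pow_le (by omega : 1 ≤ p) hx hy hs ht
  rcases mul_nonneg_iff.1 hAB with ⟨hA, hB⟩ | ⟨hA, hB⟩
  · exact key hA hB
  · have := key (neg_nonneg.2 hA) (neg_nonneg.2 hB)
    rw [show s * -A + t * -B = -(s * A + t * B) by ring, show -A + -B = -(A + B) by ring,
      abs_neg, abs_neg] at this
    linear_combination this

lemma rpow_div_sub_rpow_div_le {p q s : ℝ} (hp : 0 < p) (hpq : p ≤ q) (hs : 0 ≤ s) :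
    s ^ p / p - s ^ q / q ≤ 1 / p - 1 / q := by
  have hq : 0 < q := hp.trans_le hpq
  have hx : -1 ≤ s ^ p - 1 := by linarith [Real.rpow_nonneg hs p]
  have hbernoulli := one_add_mul_self_le_rpow_one_add hx ((one_le_div hp).2 hpq)
  rw [add_sub_cancel, ← Real.rpow_mul hs, mul_div_cancel₀ _ hp.ne'] at hbernoulli
  have hdiv : (1 + q / p * (s ^ p - 1)) / q ≤ s ^ q / q :=
    div_le_div_of_nonneg_right hbernoulli hq.le
  have e : (1 + q / p * (s ^ p - 1)) / q = 1 / q + s ^ p / p - 1 / p := by field_simp; ring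
  linarith

lemma rpow_mul_one_sub_mul_log_le {q s : ℝ} (hs : 0 ≤ s) : s ^ q * (1 - q * Real.log s) ≤ 1 := by
  rcases hs.eq_or_lt with rfl | hs
  · rcases eq_or_ne q 0 with rfl | hq <;> simp [*]
  have := Real.self_sub_one_le_mul_log (Real.rpow_nonneg hs.le q)
  rw [Real.log_rpow hs] at this
  linarith

/-- With `α_v` the principal part of `⟨I'(u), v⟩` and `γ_v = ∑ c |v|^q` for the two sign-components
`v`, `w` of `u ∈ ℳ`, one has `I(s v + t w) ≤ fiber α_v γ_v s + fiber α_w γ_w t`. -/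
def fiber (p q r α γ s : ℝ) : ℝ :=
  1 / p * s ^ p * α + r / q ^ 2 * s ^ q * γ - 1 / q * s ^ q * (α + r * Real.log s * γ)

lemma fiber_one (p q r α γ : ℝ) : fiber p q r α γ 1 = (1 / p - 1 / q) * α + r / q ^ 2 * γ := by
  simp only [fiber, Real.one_rpow, Real.log_one]
  ring

lemma fiber_le_fiber_one {p q r α γ s : ℝ} (hp : 0 < p) (hpq : p ≤ q) (hr : 0 ≤ r)
    (hα : 0 ≤ α) (hγ : 0 ≤ γ) (hs : 0 ≤ s) : fiber p q r α γ s ≤ fiber p q r α γ 1 := by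
  have hq : 0 < q := hp.trans_le hpq
  have h₁ := mul_le_mul_of_nonneg_left (rpow_div_sub_rpow_div_le hp hpq hs) hα
  have h₂ := mul_le_mul_of_nonneg_left (rpow_mul_one_sub_mul_log_le (q := q) hs)
    (by positivity : 0 ≤ r / q ^ 2 * γ)
  have e : fiber p q r α γ s
      = α * (s ^ p / p - s ^ q / q) + r / q ^ 2 * γ * (s ^ q * (1 - q * Real.log s)) := by
    unfold fiber; field_simp; ring
  rw [e, fiber_one]
  linarith

lemma map_add_of_mul_eq_zero {R M : Type*} [NonUnitalNonAssocSemiring R] [NoZeroDivisors R]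
    [AddZeroClass M] {f : R → M} (hf : f 0 = 0) {x y : R} (hxy : x * y = 0) :
    f (x + y) = f x + f y := by
  rcases mul_eq_zero.1 hxy with rfl | rfl <;> simp [hf]

lemma _root_.Summable.of_forall_eq_zero_or_eq {ι : Type*} {f g : ι → ℝ} (hg : Summable g)
    (h : ∀ i, f i = 0 ∨ f i = g i) : Summable f :=
  hg.abs.of_norm_bounded fun i => by rcases h i with hi | hi <;> simp [hi]

structure IsSplitting (u v w : ℤ → ℝ) : Prop where
  add_eq : ∀ n, v n + w n = u n
  mul_eq_zero : ∀ n, v n * w n = 0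
  dlt_mul_nonneg : ∀ n, 0 ≤ dlt v n * dlt w n

lemma pos_mul_neg (u : ℤ → ℝ) (n : ℤ) : pos u n * neg u n = 0 := by
  rcases le_total (u n) 0 with h | h
  · simp [pos, h]
  · simp [neg, h]

lemma isSplitting_pos_neg (u : ℤ → ℝ) : IsSplitting u (pos u) (neg u) where
  add_eq n := (max_add_min (u n) 0).trans (add_zero _)
  mul_eq_zero := pos_mul_neg u
  dlt_mul_nonneg n := by
    have hP (m : ℤ) : 0 ≤ pos u m := le_max_right _ _
    have hN (m : ℤ) : neg u m ≤ 0 := min_le_right _ _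
    unfold dlt
    nlinarith [pos_mul_neg u n, pos_mul_neg u (n + 1),
      mul_nonpos_of_nonneg_of_nonpos (hP (n + 1)) (hN n),
      mul_nonpos_of_nonneg_of_nonpos (hP n) (hN (n + 1))]

def pairSummand (a b : ℤ → ℝ) (p : ℕ) (u v : ℤ → ℝ) (n : ℤ) : ℝ :=
  a n * |dlt u n| ^ (p - 2) * dlt u n * dlt v n + b n * |u n| ^ (p - 2) * u n * v n

section Norm

variable {a b : ℤ → ℝ} {p : ℕ}

lemma nsum_nonneg (ha : ∀ n, 0 ≤ a n) (hb : ∀ n, 0 ≤ b n) (u : ℤ → ℝ) (n : ℤ) :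
    0 ≤ nsum a b p u n :=
  add_nonneg (mul_nonneg (ha n) (by positivity)) (mul_nonneg (hb n) (by positivity))

lemma dnorm_pow (ha : ∀ n, 0 ≤ a n) (hb : ∀ n, 0 ≤ b n) (hp : p ≠ 0) (u : ℤ → ℝ) :
    dnorm a b p u ^ p = ∑' n, nsum a b p u n :=
  Real.rpow_inv_natCast_pow (tsum_nonneg (nsum_nonneg ha hb u)) hp

lemma memE.exists_abs_le {u : ℤ → ℝ} {b0 : ℝ} (ha : ∀ n, 0 ≤ a n) (hb0 : 0 < b0)
    (hbb : ∀ n, b0 ≤ b n) (hp : p ≠ 0) (hu : memE a b p u) : ∃ K, ∀ n, |u n| ≤ K := by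
  refine ⟨max 1 ((∑' m, nsum a b p u m) / b0), fun n => ?_⟩
  have hb : ∀ n, 0 ≤ b n := fun n => hb0.le.trans (hbb n)
  have hle : b0 * |u n| ^ p ≤ ∑' m, nsum a b p u m :=
    calc b0 * |u n| ^ p ≤ nsum a b p u n := by
          unfold nsum
          nlinarith [mul_nonneg (ha n) (pow_nonneg (abs_nonneg (dlt u n)) p),
            mul_le_mul_of_nonneg_right (hbb n) (pow_nonneg (abs_nonneg (u n)) p)]
      _ ≤ ∑' m, nsum a b p u m := hu.le_tsum n fun m _ => nsum_nonneg ha hb u m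
  rcases le_total |u n| 1 with h1 | h1
  · exact h1.trans (le_max_left _ _)
  · refine le_trans ?_ (le_max_right _ _)
    rw [le_div_iff₀ hb0]
    nlinarith [le_self_pow₀ h1 hp]

namespace IsSplitting

variable {u v w : ℤ → ℝ}

lemma symm (h : IsSplitting u v w) : IsSplitting u w v :=
  ⟨fun n => by rw [add_comm, h.add_eq], fun n => by rw [mul_comm, h.mul_eq_zero],
    fun n => by rw [mul_comm]; exact h.dlt_mul_nonneg n⟩

lemma eq_zero_or_eq (h : IsSplitting u v w) (n : ℤ) : v n = 0 ∨ v n = u n := by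
  rcases _root_.mul_eq_zero.1 (h.mul_eq_zero n) with hv | hw
  · exact .inl hv
  · exact .inr (by rw [← h.add_eq n, hw, add_zero])

lemma dlt_add_eq (h : IsSplitting u v w) (n : ℤ) : dlt v n + dlt w n = dlt u n := by
  simp only [dlt, ← h.add_eq]
  ring

lemma pairSummand_add (hp : 2 ≤ p) (h : IsSplitting u v w) (n : ℤ) :
    pairSummand a b p u v n + pairSummand a b p u w n = nsum a b p u n := by
  unfold pairSummand nsum
  linear_combination (a n * |dlt u n| ^ (p - 2) * dlt u n) * h.dlt_add_eq n
    + a n * abs_pow_sub_two_mul_self hp (dlt u n) + (b n * |u n| ^ (p - 2) * u n) * h.add_eq n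
    + b n * abs_pow_sub_two_mul_self hp (u n)

lemma pairSummand_nonneg (ha : ∀ n, 0 ≤ a n) (hb : ∀ n, 0 ≤ b n) (h : IsSplitting u v w)
    (n : ℤ) : 0 ≤ pairSummand a b p u v n := by
  have hd := mul_nonneg (ha n) (abs_pow_sub_two_mul_add_mul_nonneg p (h.dlt_mul_nonneg n))
  have hu := mul_nonneg (hb n) (abs_pow_sub_two_mul_add_mul_nonneg p (h.mul_eq_zero n).ge)
  rw [h.dlt_add_eq] at hd
  rw [h.add_eq] at hu
  unfold pairSummand
  linarith

lemma nsum_mul_add_mul_le (ha : ∀ n, 0 ≤ a n) (hb : ∀ n, 0 ≤ b n) (hp : 2 ≤ p)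
    (h : IsSplitting u v w) {s t : ℝ} (hs : 0 ≤ s) (ht : 0 ≤ t) (n : ℤ) :
    nsum a b p (fun m => s * v m + t * w m) n
      ≤ s ^ p * pairSummand a b p u v n + t ^ p * pairSummand a b p u w n := by
  have hd := mul_le_mul_of_nonneg_left (abs_mul_add_mul_pow_le hp (h.dlt_mul_nonneg n) hs ht) (ha n)
  have hu := mul_le_mul_of_nonneg_left (abs_mul_add_mul_pow_le hp (h.mul_eq_zero n).ge hs ht) (hb n)
  rw [h.dlt_add_eq] at hd
  rw [h.add_eq] at hu
  have hdlt : dlt (fun m => s * v m + t * w m) n = s * dlt v n + t * dlt w n := by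
    simp only [dlt]
    ring
  unfold nsum pairSummand
  rw [hdlt]
  linarith

lemma summable_pairSummand (ha : ∀ n, 0 ≤ a n) (hb : ∀ n, 0 ≤ b n) (hp : 2 ≤ p)
    (h : IsSplitting u v w) (hu : memE a b p u) : Summable (pairSummand a b p u v) :=
  hu.of_nonneg_of_le (h.pairSummand_nonneg ha hb) fun n => by
    linarith [h.pairSummand_add (a := a) (b := b) hp n, h.symm.pairSummand_nonneg (p := p) ha hb n]

lemma tsum_nsum_eq (ha : ∀ n, 0 ≤ a n) (hb : ∀ n, 0 ≤ b n) (hp : 2 ≤ p)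
    (h : IsSplitting u v w) (hu : memE a b p u) :
    ∑' n, nsum a b p u n = ∑' n, pairSummand a b p u v n + ∑' n, pairSummand a b p u w n := by
  rw [← (h.summable_pairSummand ha hb hp hu).tsum_add (h.symm.summable_pairSummand ha hb hp hu)]
  exact tsum_congr fun n => (h.pairSummand_add hp n).symm

lemma tsum_nsum_mul_add_mul_le (ha : ∀ n, 0 ≤ a n) (hb : ∀ n, 0 ≤ b n) (hp : 2 ≤ p)
    (h : IsSplitting u v w) (hu : memE a b p u) {s t : ℝ} (hs : 0 ≤ s) (ht : 0 ≤ t) :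
    ∑' n, nsum a b p (fun m => s * v m + t * w m) n
      ≤ s ^ p * ∑' n, pairSummand a b p u v n + t ^ p * ∑' n, pairSummand a b p u w n := by
  have hv := (h.summable_pairSummand ha hb hp hu).mul_left (s ^ p)
  have hw := (h.symm.summable_pairSummand ha hb hp hu).mul_left (t ^ p)
  have hle := h.nsum_mul_add_mul_le ha hb hp hs ht
  rw [← tsum_mul_left, ← tsum_mul_left, ← hv.tsum_add hw]
  exact ((hv.add hw).of_nonneg_of_le (nsum_nonneg ha hb _) hle).tsum_le_tsum hle (hv.add hw)

end IsSplitting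

end Norm

lemma abs_mul_rpow_of_nonneg {s : ℝ} (hs : 0 ≤ s) (x q : ℝ) : |s * x| ^ q = s ^ q * |x| ^ q := by
  rw [abs_mul, abs_of_nonneg hs, Real.mul_rpow hs (abs_nonneg x)]

lemma abs_mul_rpow_mul_log {q s : ℝ} (hq : q ≠ 0) (hs : 0 ≤ s) (x r : ℝ) :
    |s * x| ^ q * Real.log (|s * x| ^ r)
      = s ^ q * (|x| ^ q * Real.log (|x| ^ r) + r * Real.log s * |x| ^ q) := by
  rcases hs.eq_or_lt with rfl | hs
  · simp [Real.zero_rpow hq]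
  rcases (abs_nonneg x).eq_or_lt with hx | hx
  · simp [← hx, Real.zero_rpow hq]
  rw [abs_mul_rpow_of_nonneg hs.le, abs_mul, abs_of_pos hs, Real.log_rpow (mul_pos hs hx),
    Real.log_rpow hx, Real.log_mul hs.ne' hx.ne']
  ring

lemma summable_mul_abs_rpow {c u : ℤ → ℝ} {K q : ℝ} (hc : ∀ n, 0 ≤ c n) (hcs : Summable c)
    (hK : ∀ n, |u n| ≤ K) (hq : 0 ≤ q) : Summable fun n => c n * |u n| ^ q :=
  (hcs.mul_right (K ^ q)).of_nonneg_of_le (fun n => mul_nonneg (hc n) (by positivity)) fun n =>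
    mul_le_mul_of_nonneg_left (Real.rpow_le_rpow (abs_nonneg _) (hK n) hq) (hc n)

namespace IsSplitting

variable {c u v w : ℤ → ℝ} {q r : ℝ}

lemma mul_mul_mul_eq_zero (h : IsSplitting u v w) (s t : ℝ) (n : ℤ) :
    (s * v n) * (t * w n) = 0 := by
  rw [mul_mul_mul_comm, h.mul_eq_zero, mul_zero]

lemma summable_mul_abs_rpow (hq : q ≠ 0) (h : IsSplitting u v w)
    (hu : Summable fun n => c n * |u n| ^ q) : Summable fun n => c n * |v n| ^ q :=
  hu.of_forall_eq_zero_or_eq fun n => by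
    rcases h.eq_zero_or_eq n with hv | hv <;> simp [hv, Real.zero_rpow hq]

lemma summable_logSummand (hq : q ≠ 0) (h : IsSplitting u v w)
    (hu : Summable (logSummand c q r u)) : Summable (logSummand c q r v) :=
  hu.of_forall_eq_zero_or_eq fun n => by
    rcases h.eq_zero_or_eq n with hv | hv <;> simp [logSummand, hv, Real.zero_rpow hq]

lemma tsum_mul_abs_rpow_mul_add_mul (hq : q ≠ 0) (h : IsSplitting u v w)
    (hu : Summable fun n => c n * |u n| ^ q) {s t : ℝ} (hs : 0 ≤ s) (ht : 0 ≤ t) :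
    ∑' n, c n * |s * v n + t * w n| ^ q
      = s ^ q * ∑' n, c n * |v n| ^ q + t ^ q * ∑' n, c n * |w n| ^ q := by
  have hsplit (n : ℤ) : c n * |s * v n + t * w n| ^ q
      = s ^ q * (c n * |v n| ^ q) + t ^ q * (c n * |w n| ^ q) := by
    rw [map_add_of_mul_eq_zero (f := fun x => c n * |x| ^ q) (by simp [Real.zero_rpow hq])
      (h.mul_mul_mul_eq_zero s t n), abs_mul_rpow_of_nonneg hs, abs_mul_rpow_of_nonneg ht]
    ring
  rw [tsum_congr hsplit, ((h.summable_mul_abs_rpow hq hu).mul_left _).tsum_add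
    ((h.symm.summable_mul_abs_rpow hq hu).mul_left _), tsum_mul_left, tsum_mul_left]

lemma tsum_logSummand_mul_add_mul (hq : q ≠ 0) (h : IsSplitting u v w)
    (hcu : Summable fun n => c n * |u n| ^ q) (hu : Summable (logSummand c q r u))
    {s t : ℝ} (hs : 0 ≤ s) (ht : 0 ≤ t) :
    ∑' n, logSummand c q r (fun m => s * v m + t * w m) n
      = s ^ q * (∑' n, logSummand c q r v n + r * Real.log s * ∑' n, c n * |v n| ^ q)
        + t ^ q * (∑' n, logSummand c q r w n + r * Real.log t * ∑' n, c n * |w n| ^ q) := by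
  have hsplit (n : ℤ) : logSummand c q r (fun m => s * v m + t * w m) n
      = s ^ q * (logSummand c q r v n + r * Real.log s * (c n * |v n| ^ q))
        + t ^ q * (logSummand c q r w n + r * Real.log t * (c n * |w n| ^ q)) := by
    unfold logSummand
    rw [map_add_of_mul_eq_zero (f := fun x => c n * |x| ^ q * Real.log (|x| ^ r))
      (by simp [Real.zero_rpow hq]) (h.mul_mul_mul_eq_zero s t n)]
    simp only [mul_assoc, abs_mul_rpow_mul_log hq hs, abs_mul_rpow_mul_log hq ht]
    ring
  have hlv := h.summable_logSummand hq hu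
  have hlw := h.symm.summable_logSummand hq hu
  have hcv := (h.summable_mul_abs_rpow hq hcu).mul_left (r * Real.log s)
  have hcw := (h.symm.summable_mul_abs_rpow hq hcu).mul_left (r * Real.log t)
  rw [tsum_congr hsplit, ((hlv.add hcv).mul_left _).tsum_add ((hlw.add hcw).mul_left _),
    tsum_mul_left, tsum_mul_left, hlv.tsum_add hcv, hlw.tsum_add hcw, tsum_mul_left, tsum_mul_left]

lemma tsum_pairSummand_eq_of_pr_eq_zero {a b : ℤ → ℝ} {p : ℕ} (hq : q ≠ 0)
    (h : IsSplitting u v w) (hpr : pr a b c p q r u v = 0) :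
    ∑' n, pairSummand a b p u v n = ∑' n, logSummand c q r v n := by
  have hlog (n : ℤ) : c n * |u n| ^ (q - 2) * u n * v n * Real.log (|u n| ^ r)
      = logSummand c q r v n := by
    rcases h.eq_zero_or_eq n with hv | hv
    · simp [logSummand, hv, Real.zero_rpow hq]
    · rw [logSummand, hv, ← abs_rpow_sub_two_mul_self hq]
      ring
  rwa [pr, tsum_congr hlog, sub_eq_zero] at hpr

theorem En_mul_add_mul_le {a b : ℤ → ℝ} {p : ℕ} {s t : ℝ} (hp : 2 ≤ p) (hpq : (p : ℝ) < q)
    (hr : 0 ≤ r) (ha : ∀ n, 0 ≤ a n) (hb : ∀ n, 0 ≤ b n) (hc : ∀ n, 0 ≤ c n)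
    (hcu : Summable fun n => c n * |u n| ^ q) (hu : memD a b c p q r u) (h : IsSplitting u v w)
    (hv : pr a b c p q r u v = 0) (hw : pr a b c p q r u w = 0) (hs : 0 ≤ s) (ht : 0 ≤ t) :
    En a b c p q r (fun n => s * v n + t * w n) ≤ En a b c p q r u := by
  have hp0 : (0 : ℝ) < p := by positivity
  have hq : q ≠ 0 := (hp0.trans hpq).ne'
  have hα₁ : 0 ≤ ∑' n, pairSummand a b p u v n := tsum_nonneg (h.pairSummand_nonneg ha hb)
  have hα₂ : 0 ≤ ∑' n, pairSummand a b p u w n := tsum_nonneg (h.symm.pairSummand_nonneg ha hb)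
  have hγ₁ : 0 ≤ ∑' n, c n * |v n| ^ q := tsum_nonneg fun n => mul_nonneg (hc n) (by positivity)
  have hγ₂ : 0 ≤ ∑' n, c n * |w n| ^ q := tsum_nonneg fun n => mul_nonneg (hc n) (by positivity)
  have hEn_u : En a b c p q r u
      = fiber p q r (∑' n, pairSummand a b p u v n) (∑' n, c n * |v n| ^ q) 1
        + fiber p q r (∑' n, pairSummand a b p u w n) (∑' n, c n * |w n| ^ q) 1 := by
    have hc1 := h.tsum_mul_abs_rpow_mul_add_mul hq hcu zero_le_one zero_le_one
    have hl1 := h.tsum_logSummand_mul_add_mul hq hcu hu.2 zero_le_one zero_le_one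
    simp only [one_mul, h.add_eq, Real.one_rpow] at hc1 hl1
    rw [En, dnorm_pow ha hb (by omega), h.tsum_nsum_eq ha hb hp hu.1, hc1, hl1,
      ← h.tsum_pairSummand_eq_of_pr_eq_zero hq hv, ← h.symm.tsum_pairSummand_eq_of_pr_eq_zero hq hw,
      fiber_one, fiber_one, Real.log_one]
    ring
  have hEn_st : En a b c p q r (fun n => s * v n + t * w n)
      ≤ fiber p q r (∑' n, pairSummand a b p u v n) (∑' n, c n * |v n| ^ q) s
        + fiber p q r (∑' n, pairSummand a b p u w n) (∑' n, c n * |w n| ^ q) t := by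
    have hnorm := mul_le_mul_of_nonneg_left (h.tsum_nsum_mul_add_mul_le ha hb hp hu.1 hs ht)
      (by positivity : 0 ≤ 1 / (p : ℝ))
    rw [En, dnorm_pow ha hb (by omega), h.tsum_mul_abs_rpow_mul_add_mul hq hcu hs ht,
      h.tsum_logSummand_mul_add_mul hq hcu hu.2 hs ht,
      ← h.tsum_pairSummand_eq_of_pr_eq_zero hq hv, ← h.symm.tsum_pairSummand_eq_of_pr_eq_zero hq hw]
    simp only [fiber, Real.rpow_natCast]
    linarith
  rw [hEn_u]
  exact hEn_st.trans (add_le_add (fiber_le_fiber_one hp0 hpq.le hr hα₁ hγ₁ hs)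
    (fiber_le_fiber_one hp0 hpq.le hr hα₂ hγ₂ ht))

end IsSplitting

theorem stmt8_general (p : ℕ) (hp2 : 2 ≤ p)
    (q r : ℝ) (hpq : (p : ℝ) < q) (hr : 1 ≤ r)
    (a b c : ℤ → ℝ)
    (ha : ∀ n, 0 < a n) (hb : ∀ n, 0 < b n) (hc : ∀ n, 0 < c n)
    (b0 : ℝ) (hb0 : 0 < b0) (hbb : ∀ n, b0 ≤ b n)
    (hcsum : Summable c)
    (u : ℤ → ℝ) (hu : u ∈ Mset a b c p q r) :
    IsGreatest
      {x : ℝ | ∃ s t : ℝ, 0 ≤ s ∧ 0 ≤ t ∧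
        x = En a b c p q r (fun n => s * pos u n + t * neg u n)}
      (En a b c p q r u) := by
  obtain ⟨hD, -, -, hpos, hneg⟩ := hu
  have hsplit := isSplitting_pos_neg u
  obtain ⟨K, hK⟩ := hD.1.exists_abs_le (fun n => (ha n).le) hb0 hbb (by omega)
  have hcu := summable_mul_abs_rpow (fun n => (hc n).le) hcsum hK ((Nat.cast_nonneg p).trans hpq.le)
  refine ⟨⟨1, 1, zero_le_one, zero_le_one, ?_⟩, ?_⟩
  · simp only [one_mul, hsplit.add_eq]
  · rintro _ ⟨s, t, hs, ht, rfl⟩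
    exact hsplit.En_mul_add_mul_le hp2 hpq (zero_le_one.trans hr) (fun n => (ha n).le)
      (fun n => (hb n).le) (fun n => (hc n).le) hcu hD hpos hneg hs ht

theorem stmt8 (p : ℕ) (hp2 : 2 ≤ p) (hpe : Even p)
    (q r : ℝ) (hpq : (p : ℝ) < q) (hr : 1 ≤ r)
    (a b c : ℤ → ℝ)
    (ha : ∀ n, 0 < a n) (hb : ∀ n, 0 < b n) (hc : ∀ n, 0 < c n)
    (b0 : ℝ) (hb0 : 0 < b0) (hbb : ∀ n, b0 ≤ b n)
    (hbinf : Tendsto b cofinite atTop)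
    (c0 : ℝ) (hc0 : 0 < c0) (hcc : ∀ n, c n ≤ c0)
    (hcsum : Summable c)
    (u : ℤ → ℝ) (hu : u ∈ Mset a b c p q r) :
    IsGreatest
      {x : ℝ | ∃ s t : ℝ, 0 ≤ s ∧ 0 ≤ t ∧
        x = En a b c p q r (fun n => s * pos u n + t * neg u n)}
      (En a b c p q r u) :=
  stmt8_general p hp2 q r hpq hr a b c ha hb hc b0 hb0 hbb hcsum u hu

end DPLap
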